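/- arXiv:2111.06951 — 6 statements merged into one kernel-verified Lean document; each statement's English description precedes it below -/
import Mathlib

section
/- (Shannon–Whittaker sampling theorem.) Let W > 0 and let g : ℝ → ℂ be integrable with g(ξ) = 0 for all ξ outside [−W, W]. Define f(x) = ∫_ℝ g(ξ) e^{2πixξ} dξ, and suppose the sampled values are absolutely summable: ∑_{n∈ℤ} |f(n/(2W))| < ∞. Then for every x ∈ ℝ, f(x) = ∑_{n∈ℤ} f(n/(2W)) · sinc(2Wx − n), where the series converges absolutely. -/
open MeasureTheory Real

/-- The normalized sinc function `sinc x = sin(πx)/(πx)`, with `sinc 0 = 1`. -/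
noncomputable def sinc (x : ℝ) : ℝ := if x = 0 then 1 else Real.sin (π * x) / (π * x)

/-!
The samples are, up to the factor `2W`, the Fourier coefficients of `g` on the circle
`ℝ / 2Wℤ`, so their absolute summability makes the Fourier series `S` of `g` converge
uniformly. `S` and `g` have the same Fourier coefficients, hence agree a.e. on `(-W, W)`:
trigonometric polynomials are dense in the continuous periodic functions, and a locally
integrable function orthogonal to all test functions vanishes a.e. Finally
`f(x) = ∫_{-W}^{W} S(ξ) e^{2πixξ} dξ` is integrated term by term, each exponential contributing
a shifted sinc because `∫_{-W}^{W} e^{2πiyξ} dξ = 2W sinc(2Wy)`.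
-/

open Complex Set Filter intervalIntegral

theorem Summable.norm_div_const {ι 𝕜 : Type*} [NormedDivisionRing 𝕜] {a : ι → 𝕜}
    (ha : Summable fun n => ‖a n‖) (c : 𝕜) : Summable fun n => ‖a n / c‖ := by
  simpa only [norm_div] using ha.div_const ‖c‖

theorem sinc_eq_sinc_pi_mul (x : ℝ) : _root_.sinc x = Real.sinc (π * x) := by
  by_cases hx : x = 0
  · simp [_root_.sinc, hx]
  · simp [_root_.sinc, hx, Real.sinc_of_ne_zero, pi_ne_zero]

theorem sinc_intCast (n : ℤ) : _root_.sinc n = if n = 0 then 1 else 0 := by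
  split_ifs with hn
  · simp [_root_.sinc, hn]
  · rw [sinc_eq_sinc_pi_mul, Real.sinc_of_ne_zero (by positivity), mul_comm, Real.sin_int_mul_pi,
      zero_div]

theorem hasSum_mul_sinc_intCast_sub (a : ℤ → ℂ) (m : ℤ) :
    HasSum (fun n : ℤ => a n * _root_.sinc (m - n)) (a m) := by
  convert hasSum_ite_eq m (a m) using 2 with n
  rw [← Int.cast_sub, sinc_intCast]
  by_cases h : n = m <;> simp [h, sub_eq_zero, Ne.symm]

theorem norm_mul_cexp_two_pi_I_mul (c : ℂ) (x ξ : ℝ) :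
    ‖c * cexp (2 * π * I * x * ξ)‖ = ‖c‖ := by
  rw [norm_mul, show 2 * π * I * x * ξ = ((2 * π * x * ξ : ℝ) : ℂ) * I by push_cast; ring,
    norm_exp_ofReal_mul_I, mul_one]

theorem fourier_coe_eq_cexp (T : ℝ) (n : ℤ) (x : ℝ) :
    fourier n (x : AddCircle T) = cexp (2 * π * I * (n / T : ℝ) * x) := by
  rw [fourier_coe_apply]
  congr 1
  push_cast
  ring

theorem integral_cexp_eq_sinc (W x : ℝ) :
    ∫ ξ in -W..W, cexp (2 * π * I * x * ξ) = 2 * W * _root_.sinc (2 * W * x) := by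
  rcases eq_or_ne (2 * W * x) 0 with h | h
  · rcases mul_eq_zero.1 h with hW | rfl
    · obtain rfl : W = 0 := by linarith
      simp
    · simp [_root_.sinc]
      ring
  have hc : 2 * π * I * x ≠ 0 := by
    have : x ≠ 0 := right_ne_zero_of_mul h
    simp [pi_ne_zero, this]
  have hsin : cexp (2 * π * I * x * W) - cexp (2 * π * I * x * (-W : ℝ)) =
      2 * I * Complex.sin (π * (2 * W * x)) := by
    rw [show 2 * π * I * x * W = (π * (2 * W * x) : ℂ) * I by ring,
      show 2 * π * I * x * (-W : ℝ) = -(π * (2 * W * x) : ℂ) * I by push_cast; ring,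
      exp_mul_I, exp_mul_I, Complex.cos_neg, Complex.sin_neg]
    ring
  rw [integral_exp_mul_complex hc, hsin, _root_.sinc, if_neg h]
  have hW : (W : ℂ) ≠ 0 := by exact_mod_cast right_ne_zero_of_mul (left_ne_zero_of_mul h)
  have hx : (x : ℂ) ≠ 0 := by exact_mod_cast right_ne_zero_of_mul h
  push_cast
  field_simp

noncomputable def sampleFourierSeries (W : ℝ) (a : ℤ → ℂ) (ξ : ℝ) : ℂ :=
  ∑' n : ℤ, a n / (2 * W) * cexp (2 * π * I * (-n / (2 * W) : ℝ) * ξ)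

section sampleFourierSeries

variable {W : ℝ} {a : ℤ → ℂ}

theorem continuous_sampleFourierSeries (ha : Summable fun n => ‖a n‖) :
    Continuous (sampleFourierSeries W a) :=
  continuous_tsum (fun n => by fun_prop) (ha.norm_div_const (2 * W))
    fun n ξ => (norm_mul_cexp_two_pi_I_mul _ _ ξ).le

theorem hasSum_sinc_integral_sampleFourierSeries (hW : W ≠ 0) (ha : Summable fun n => ‖a n‖)
    (x : ℝ) :
    HasSum (fun n : ℤ => a n * _root_.sinc (2 * W * x - n))
      (∫ ξ in -W..W, sampleFourierSeries W a ξ * cexp (2 * π * I * x * ξ)) := by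
  have hlim (ξ : ℝ) :
      HasSum (fun n : ℤ => a n / (2 * W) * cexp (2 * π * I * (x - n / (2 * W) : ℝ) * ξ))
        (sampleFourierSeries W a ξ * cexp (2 * π * I * x * ξ)) := by
    have hsummable := (ha.norm_div_const (2 * W)).of_norm_bounded fun n =>
      (norm_mul_cexp_two_pi_I_mul _ (-n / (2 * W)) ξ).le
    have hshift (n : ℤ) : a n / (2 * W) * cexp (2 * π * I * (x - n / (2 * W) : ℝ) * ξ) =
        a n / (2 * W) * cexp (2 * π * I * (-n / (2 * W) : ℝ) * ξ) *
          cexp (2 * π * I * x * ξ) := by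
      rw [mul_assoc _ (cexp _), ← Complex.exp_add]
      push_cast
      ring_nf
    simp_rw [hshift]
    exact hsummable.hasSum.mul_right _
  have hint (n : ℤ) :
      ∫ ξ in -W..W, a n / (2 * W) * cexp (2 * π * I * (x - n / (2 * W) : ℝ) * ξ) =
        a n * _root_.sinc (2 * W * x - n) := by
    have hW' : (W : ℂ) ≠ 0 := by exact_mod_cast hW
    rw [intervalIntegral.integral_const_mul, integral_cexp_eq_sinc,
      show 2 * W * (x - n / (2 * W)) = 2 * W * x - n by field_simp]
    field_simp
  simp_rw [← hint]
  exact intervalIntegral.hasSum_integral_of_dominated_convergence (fun n _ => ‖a n / (2 * W)‖)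
    (fun n => by fun_prop) (fun n => ae_of_all _ fun ξ _ => (norm_mul_cexp_two_pi_I_mul _ _ ξ).le)
    (ae_of_all _ fun _ _ => ha.norm_div_const (2 * W)) intervalIntegrable_const
    (ae_of_all _ fun ξ _ => hlim ξ)

end sampleFourierSeries

section FourierUniqueness

variable {a b : ℝ} {φ : ℝ → ℂ}

noncomputable def intervalIntegralMulCLM {T : ℝ} [Fact (0 < T)] (hab : a ≤ b)
    (hφ : IntervalIntegrable φ volume a b) : C(AddCircle T, ℂ) →L[ℂ] ℂ :=
  LinearMap.mkContinuous
    { toFun := fun Ψ : C(AddCircle T, ℂ) => ∫ x in a..b, Ψ x * φ x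
      map_add' := fun Ψ Ψ' => by
        simp_rw [ContinuousMap.add_apply, add_mul]
        exact intervalIntegral.integral_add
          (hφ.continuousOn_mul (by fun_prop)) (hφ.continuousOn_mul (by fun_prop))
      map_smul' := fun c Ψ => by
        simp_rw [ContinuousMap.smul_apply, smul_eq_mul, mul_assoc]
        exact intervalIntegral.integral_const_mul _ _ }
    (∫ x in a..b, ‖φ x‖) fun Ψ : C(AddCircle T, ℂ) => by
      calc ‖∫ x in a..b, Ψ x * φ x‖ ≤ ∫ x in a..b, ‖Ψ‖ * ‖φ x‖ :=
            intervalIntegral.norm_integral_le_of_norm_le hab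
              (ae_of_all _ fun x _ => by rw [norm_mul]; gcongr; exact Ψ.norm_coe_le_norm _)
              (hφ.norm.const_mul _)
        _ = (∫ x in a..b, ‖φ x‖) * ‖Ψ‖ := by
            rw [intervalIntegral.integral_const_mul, mul_comm]

theorem integral_continuousMap_mul_eq_zero_of_integral_fourier_mul_eq_zero {T : ℝ}
    [Fact (0 < T)] (hab : a ≤ b) (hφ : IntervalIntegrable φ volume a b)
    (h : ∀ n : ℤ, ∫ x in a..b, fourier n (x : AddCircle T) * φ x = 0)
    (Ψ : C(AddCircle T, ℂ)) : ∫ x in a..b, Ψ x * φ x = 0 := by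
  let Λ := intervalIntegralMulCLM (T := T) hab hφ
  have hspan :
      Submodule.span ℂ (range fourier) ≤ LinearMap.ker (Λ : C(AddCircle T, ℂ) →ₗ[ℂ] ℂ) :=
    Submodule.span_le.2 <| by rintro _ ⟨n, rfl⟩; exact h n
  have htop := (Submodule.span ℂ (range (@fourier T))).topologicalClosure_minimal hspan
    Λ.isClosed_ker
  rw [span_fourier_closure_eq_top] at htop
  exact htop Submodule.mem_top

theorem ae_eq_zero_of_integral_fourier_mul_eq_zero (hab : a < b)
    (hφ : IntervalIntegrable φ volume a b)
    (h : ∀ n : ℤ, ∫ x in a..b, fourier n (x : AddCircle (b - a)) * φ x = 0) :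
    φ =ᵐ[volume.restrict (Ioc a b)] 0 := by
  rw [← Measure.restrict_congr_set Ioo_ae_eq_Ioc, EventuallyEq,
    ae_restrict_iff' measurableSet_Ioo]
  refine isOpen_Ioo.ae_eq_zero_of_integral_contDiff_smul_eq_zero
    ((intervalIntegrable_iff_integrableOn_Ioc_of_le hab.le).1 hφ |>.mono_set
      Ioo_subset_Ioc_self).locallyIntegrableOn fun ψ hψ _ hsupp => ?_
  have hψ_zero {x : ℝ} (hx : x ∉ Ioo a b) : ψ x = 0 :=
    image_eq_zero_of_notMem_tsupport fun h => hx (hsupp h)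
  have : Fact (0 < b - a) := ⟨sub_pos.2 hab⟩
  -- `ψ` vanishes at both ends, so it descends to a continuous function on the circle.
  let Ψ : C(AddCircle (b - a), ℂ) :=
    ⟨AddCircle.liftIoc (b - a) a fun x => (ψ x : ℂ),
      AddCircle.liftIoc_continuous (f := fun x => (ψ x : ℂ))
        (by rw [add_sub_cancel, hψ_zero (by simp), hψ_zero (by simp)])
        (continuous_ofReal.comp hψ.continuous).continuousOn⟩
  calc ∫ x, ψ x • φ x = ∫ x in a..b, ψ x • φ x := by
        rw [intervalIntegral.integral_of_le hab.le,
          setIntegral_eq_integral_of_forall_compl_eq_zero fun x hx => by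
            rw [hψ_zero fun h => hx (Ioo_subset_Ioc_self h), zero_smul]]
    _ = ∫ x in a..b, Ψ x * φ x := by
        refine intervalIntegral.integral_congr_ae (ae_of_all _ fun x hx => ?_)
        rw [uIoc_of_le hab.le] at hx
        rw [Complex.real_smul]
        congr 1
        have hx' : x ∈ Ioc a (a + (b - a)) := by rwa [add_sub_cancel]
        exact (AddCircle.liftIoc_coe_apply (f := fun x => (ψ x : ℂ)) hx').symm
    _ = 0 := integral_continuousMap_mul_eq_zero_of_integral_fourier_mul_eq_zero hab.le hφ h Ψ

theorem ae_eq_of_integral_fourier_mul_eq (hab : a < b) {ψ : ℝ → ℂ}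
    (hφ : IntervalIntegrable φ volume a b) (hψ : IntervalIntegrable ψ volume a b)
    (h : ∀ n : ℤ, ∫ x in a..b, fourier n (x : AddCircle (b - a)) * φ x =
      ∫ x in a..b, fourier n (x : AddCircle (b - a)) * ψ x) :
    φ =ᵐ[volume.restrict (Ioc a b)] ψ := by
  have hfourier (n : ℤ) :
      ContinuousOn (fun x : ℝ => fourier n (x : AddCircle (b - a))) (uIcc a b) :=
    ((fourier n).continuous.comp continuous_quotient_mk').continuousOn
  have hsub := ae_eq_zero_of_integral_fourier_mul_eq_zero hab (hφ.sub hψ) fun n => by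
    simp_rw [mul_sub]
    rw [intervalIntegral.integral_sub (hφ.continuousOn_mul (hfourier n))
      (hψ.continuousOn_mul (hfourier n)), h n, sub_self]
  filter_upwards [hsub] with x hx using sub_eq_zero.1 hx

end FourierUniqueness

/-- Shannon–Whittaker sampling theorem: if `g` is integrable and supported in `[−W, W]`,
`f` is its inverse Fourier transform, and the samples `f(n/(2W))` are absolutely summable,
then `f(x) = ∑_{n∈ℤ} f(n/(2W)) sinc(2Wx − n)` for every `x`, with absolute convergence. -/
theorem shannon_whittaker_sampling (W : ℝ) (hW : 0 < W) (g : ℝ → ℂ)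
    (hg : Integrable g) (hsupp : ∀ ξ : ℝ, ξ ∉ Set.Icc (-W) W → g ξ = 0)
    (f : ℝ → ℂ)
    (hf : ∀ x : ℝ, f x = ∫ ξ : ℝ, g ξ * Complex.exp (2 * (π : ℂ) * Complex.I * x * ξ))
    (hsum : Summable fun n : ℤ => ‖f (n / (2 * W))‖) :
    ∀ x : ℝ,
      (Summable fun n : ℤ => ‖f (n / (2 * W)) * (_root_.sinc (2 * W * x - n) : ℂ)‖) ∧
      HasSum (fun n : ℤ => f (n / (2 * W)) * (_root_.sinc (2 * W * x - n) : ℂ)) (f x) := by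
  set S := sampleFourierSeries W fun n : ℤ => f (n / (2 * W))
  have hS := hasSum_sinc_integral_sampleFourierSeries hW.ne' hsum
  have hg_int (y : ℝ) : ∫ ξ in -W..W, g ξ * cexp (2 * π * I * y * ξ) = f y := by
    rw [hf, intervalIntegral.integral_of_le (by linarith), ← integral_Icc_eq_integral_Ioc,
      setIntegral_eq_integral_of_forall_compl_eq_zero fun ξ hξ => by rw [hsupp ξ hξ, zero_mul]]
  have hS_samples (m : ℤ) :
      ∫ ξ in -W..W, S ξ * cexp (2 * π * I * (m / (2 * W) : ℝ) * ξ) = f (m / (2 * W)) := by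
    have := hS (m / (2 * W))
    rw [mul_div_cancel₀ _ (by positivity)] at this
    exact this.unique (hasSum_mul_sinc_intCast_sub _ m)
  have hgS : g =ᵐ[volume.restrict (uIoc (-W) W)] S := by
    rw [uIoc_of_le (by linarith)]
    refine ae_eq_of_integral_fourier_mul_eq (by linarith) hg.intervalIntegrable
      ((continuous_sampleFourierSeries hsum).intervalIntegrable _ _) fun n => ?_
    simp_rw [fourier_coe_eq_cexp, show W - -W = 2 * W by ring, mul_comm (cexp _), hg_int,
      hS_samples]
  intro x
  refine ⟨hsum.of_nonneg_of_le (fun _ => norm_nonneg _) fun n => ?_, ?_⟩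
  · rw [norm_mul, norm_real, sinc_eq_sinc_pi_mul]
    exact mul_le_of_le_one_right (norm_nonneg _) (Real.abs_sinc_le_one _)
  · rw [← hg_int x, intervalIntegral.integral_congr_ae_restrict (g := fun ξ => S ξ * _)
      (by filter_upwards [hgS] with ξ hξ; rw [hξ])]
    exact hS x
end

section
/- Fourier transform of the one-dimensional Fresnel kernel: let k > 0 and z > 0 be real numbers. Then for every real ξ, the improper integral lim_{T→∞} ∫_{−T}^{T} e^{−iπ/4} √(k/(2πz)) exp(i k x²/(2z)) e^{−2πiξx} dx exists and equals exp(−i(2π²z/k) ξ²). -/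
/-!
Completing the square turns the transform into `∫ exp (-b (x - c)²)` with `b = -i k / (2z)`
purely imaginary and `c` real. For `Re b > 0` the Gaussian integral over `ℝ` is `(π / b)^{1/2}`,
and one integration by parts, `∫_T^S e^{-bx²} = [e^{-bx²} / (-2bx)]_T^S - ∫_T^S e^{-bx²} / (2bx²)`,
bounds every tail `‖∫_T^S e^{-bx²}‖` by `1 / (‖b‖ T)`, uniformly in `Re b ≥ 0`. Hence
`‖(π / b)^{1/2} - ∫_{-S}^T e^{-bx²}‖ ≤ 1 / (‖b‖ S) + 1 / (‖b‖ T)` for `Re b > 0`, and, both sides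
being continuous in `b`, also for `b = -i k / (2z)`, where `(π / b)^{1/2} = √(2πz / k) e^{iπ/4}`.
-/

open Real Filter

open Complex MeasureTheory Set Topology

section Gaussian

variable {b : ℂ}

lemma norm_cexp_neg_mul_sq_le_one (hb : 0 ≤ b.re) (x : ℝ) : ‖cexp (-b * x ^ 2)‖ ≤ 1 := by
  rw [norm_exp, ← ofReal_pow, neg_mul, neg_re, re_mul_ofReal, exp_le_one_iff, neg_nonpos]
  positivity

lemma intervalIntegral_cexp_neg_mul_sq_eq (hb0 : b ≠ 0) {T S : ℝ} (hT : 0 < T) (hTS : T ≤ S) :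
    ∫ x in T..S, cexp (-b * x ^ 2) =
      (-2 * b * S)⁻¹ * cexp (-b * S ^ 2) - (-2 * b * T)⁻¹ * cexp (-b * T ^ 2)
        - ∫ x in T..S, (2 * b * x ^ 2)⁻¹ * cexp (-b * x ^ 2) := by
  have hx : ∀ x ∈ uIcc T S, (x : ℂ) ≠ 0 := fun x hx =>
    ofReal_ne_zero.2 (hT.trans_le (uIcc_of_le hTS ▸ hx).1).ne'
  have hu : ∀ x ∈ uIcc T S,
      HasDerivAt (fun y : ℝ => (-2 * b * y)⁻¹) (2 * b * x ^ 2)⁻¹ x := by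
    intro x hx'
    refine ((((hasDerivAt_id (x : ℂ)).const_mul (-2 * b)).inv
      (by simp [hb0, hx x hx'])).comp_ofReal).congr_deriv ?_
    have := hx x hx'
    simp only [id]
    field_simp
  have hv : ∀ x ∈ uIcc T S, HasDerivAt (fun y : ℝ => cexp (-b * y ^ 2))
      (-2 * b * x * cexp (-b * x ^ 2)) x := by
    intro x _
    refine ((((hasDerivAt_id (x : ℂ)).pow 2).const_mul (-b)).cexp).comp_ofReal.congr_deriv ?_
    simp only [Pi.pow_apply, id]
    ring
  rw [← intervalIntegral.integral_mul_deriv_eq_deriv_mul hu hv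
    ((ContinuousOn.inv₀ (by fun_prop) fun x hx' => by simp [hb0, hx x hx']).intervalIntegrable)
    ((by fun_prop : Continuous fun x : ℝ => -2 * b * x * cexp (-b * x ^ 2)).intervalIntegrable
      _ _)]
  refine intervalIntegral.integral_congr fun x hx' => ?_
  have := hx x hx'
  field_simp

lemma norm_intervalIntegral_cexp_neg_mul_sq_le (hb : 0 ≤ b.re) (hb0 : b ≠ 0) {T S : ℝ}
    (hT : 0 < T) (hTS : T ≤ S) : ‖∫ x in T..S, cexp (-b * x ^ 2)‖ ≤ (‖b‖ * T)⁻¹ := by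
  have hb' : 0 < ‖b‖ := norm_pos_iff.2 hb0
  have hS : 0 < S := hT.trans_le hTS
  have hboundary (y : ℝ) (hy : 0 < y) :
      ‖(-2 * b * y)⁻¹ * cexp (-b * y ^ 2)‖ ≤ (2 * ‖b‖ * y)⁻¹ := by
    have h := mul_le_of_le_one_right (inv_nonneg.2 (norm_nonneg (-2 * b * y)))
      (norm_cexp_neg_mul_sq_le_one hb y)
    simpa [norm_mul, abs_of_pos hy] using h
  have hpos : ∀ x ∈ uIcc T S, 0 < x := fun x hx => hT.trans_le (uIcc_of_le hTS ▸ hx).1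
  have hmajorant :
      ∫ x in T..S, (2 * ‖b‖ * x ^ 2)⁻¹ = (2 * ‖b‖ * T)⁻¹ - (2 * ‖b‖ * S)⁻¹ := by
    rw [intervalIntegral.integral_eq_sub_of_hasDerivAt (f := fun x => -(2 * ‖b‖ * x)⁻¹)]
    · ring
    · intro x hx
      have := (hpos x hx).ne'
      refine (((hasDerivAt_id x).const_mul (2 * ‖b‖)).inv (by positivity)).neg.congr_deriv ?_
      simp only [id]
      field_simp
    · exact (ContinuousOn.inv₀ (by fun_prop) fun x hx => by
        have := hpos x hx; positivity).intervalIntegrable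
  have hremainder : ‖∫ x in T..S, (2 * b * x ^ 2)⁻¹ * cexp (-b * x ^ 2)‖ ≤
      (2 * ‖b‖ * T)⁻¹ - (2 * ‖b‖ * S)⁻¹ := by
    rw [← hmajorant]
    refine intervalIntegral.norm_integral_le_of_norm_le hTS (ae_of_all _ fun x hx => ?_) ?_
    · have h := mul_le_of_le_one_right (inv_nonneg.2 (norm_nonneg (2 * b * x ^ 2)))
        (norm_cexp_neg_mul_sq_le_one hb x)
      simpa [norm_mul, ← ofReal_pow] using h
    · exact (ContinuousOn.inv₀ (by fun_prop) fun x hx => by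
        have := hpos x hx; positivity).intervalIntegrable
  rw [intervalIntegral_cexp_neg_mul_sq_eq hb0 hT hTS]
  calc _ ≤ ‖(-2 * b * S)⁻¹ * cexp (-b * S ^ 2)‖ + ‖(-2 * b * T)⁻¹ * cexp (-b * T ^ 2)‖
        + ‖∫ x in T..S, (2 * b * x ^ 2)⁻¹ * cexp (-b * x ^ 2)‖ :=
        (norm_sub_le _ _).trans (add_le_add_left (norm_sub_le _ _) _)
    _ ≤ (2 * ‖b‖ * S)⁻¹ + (2 * ‖b‖ * T)⁻¹ + ((2 * ‖b‖ * T)⁻¹ - (2 * ‖b‖ * S)⁻¹) := by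
        gcongr
        exacts [hboundary S hS, hboundary T hT]
    _ = (‖b‖ * T)⁻¹ := by field_simp; ring

lemma norm_integral_Ioi_cexp_neg_mul_sq_le (hb : 0 < b.re) {T : ℝ} (hT : 0 < T) :
    ‖∫ x in Ioi T, cexp (-b * x ^ 2)‖ ≤ (‖b‖ * T)⁻¹ :=
  le_of_tendsto (intervalIntegral_tendsto_integral_Ioi T
      (integrable_cexp_neg_mul_sq hb).integrableOn tendsto_id).norm
    ((eventually_ge_atTop T).mono fun _ hS =>
      norm_intervalIntegral_cexp_neg_mul_sq_le hb.le (ne_zero_of_re_pos hb) hT hS)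

lemma norm_cpow_sub_intervalIntegral_cexp_neg_mul_sq_le_of_re_pos (hb : 0 < b.re) {S T : ℝ}
    (hS : 0 < S) (hT : 0 < T) :
    ‖(π / b) ^ (1 / 2 : ℂ) - ∫ x in (-S)..T, cexp (-b * x ^ 2)‖ ≤
      (‖b‖ * S)⁻¹ + (‖b‖ * T)⁻¹ := by
  have hint := (integrable_cexp_neg_mul_sq hb).integrableOn (s := Iic (-S))
  have hint' := (integrable_cexp_neg_mul_sq hb).integrableOn (s := Iic T)
  -- evenness of the integrand turns the left tail into a right tail
  have hleft : ∫ x in Iic (-S), cexp (-b * x ^ 2) = ∫ x in Ioi S, cexp (-b * x ^ 2) := by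
    conv_rhs => rw [← neg_neg S, ← integral_comp_neg_Iic]
    simp
  have htails : (π / b) ^ (1 / 2 : ℂ) - ∫ x in (-S)..T, cexp (-b * x ^ 2) =
      (∫ x in Ioi S, cexp (-b * x ^ 2)) + ∫ x in Ioi T, cexp (-b * x ^ 2) := by
    rw [← integral_gaussian_complex hb, ← intervalIntegral.integral_Iic_sub_Iic hint hint',
      ← intervalIntegral.integral_Iic_add_Ioi hint' (integrable_cexp_neg_mul_sq hb).integrableOn,
      hleft]
    ring
  rw [htails]
  exact (norm_add_le _ _).trans (add_le_add (norm_integral_Ioi_cexp_neg_mul_sq_le hb hS)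
    (norm_integral_Ioi_cexp_neg_mul_sq_le hb hT))

lemma ofReal_div_mem_slitPlane {r : ℝ} (hr : 0 < r) (hb : 0 ≤ b.re) (hb0 : b ≠ 0) :
    r / b ∈ slitPlane := by
  have hn : 0 < normSq b := normSq_pos.2 hb0
  rw [mem_slitPlane_iff, div_re, div_im]
  simp only [ofReal_re, ofReal_im, zero_mul, add_zero, zero_div, zero_sub, ne_eq,
    neg_eq_zero, div_eq_zero_iff, mul_eq_zero, hr.ne', hn.ne', false_or, or_false]
  rcases hb.lt_or_eq with h | h
  · exact Or.inl (by positivity)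
  · exact Or.inr fun him => hb0 (ext h.symm him)

lemma norm_cpow_sub_intervalIntegral_cexp_neg_mul_sq_le (hb : 0 ≤ b.re) (hb0 : b ≠ 0)
    {S T : ℝ} (hS : 0 < S) (hT : 0 < T) :
    ‖(π / b) ^ (1 / 2 : ℂ) - ∫ x in (-S)..T, cexp (-b * x ^ 2)‖ ≤
      (‖b‖ * S)⁻¹ + (‖b‖ * T)⁻¹ := by
  have hcont : ContinuousAt (fun ε : ℝ =>
      (π / (b + ε)) ^ (1 / 2 : ℂ) - ∫ x in (-S)..T, cexp (-(b + ε) * x ^ 2)) 0 := by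
    refine ((continuousAt_cpow_const ?_).comp (continuousAt_const.div (by fun_prop) ?_)).sub
      (intervalIntegral.continuous_parametric_intervalIntegral_of_continuous'
        (by fun_prop) _ _).continuousAt
    · simpa using ofReal_div_mem_slitPlane pi_pos hb hb0
    · simpa using hb0
  have hbound : ContinuousAt (fun ε : ℝ => (‖b + ε‖ * S)⁻¹ + (‖b + ε‖ * T)⁻¹) 0 := by
    have : ‖b‖ ≠ 0 := norm_ne_zero_iff.2 hb0
    refine ContinuousAt.add ?_ ?_ <;> refine ContinuousAt.inv₀ (by fun_prop) ?_ <;>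
      simp [*, hS.ne', hT.ne']
  simpa using le_of_tendsto_of_tendsto (hcont.tendsto.mono_left nhdsWithin_le_nhds).norm
    (hbound.tendsto.mono_left (nhdsWithin_le_nhds (s := Ioi 0)))
    (eventually_mem_nhdsWithin.mono fun ε (hε : 0 < ε) =>
      norm_cpow_sub_intervalIntegral_cexp_neg_mul_sq_le_of_re_pos (by simp; linarith) hS hT)

lemma tendsto_intervalIntegral_cexp_neg_mul_sub_sq (hb : 0 ≤ b.re) (hb0 : b ≠ 0) (c : ℝ) :
    Tendsto (fun T : ℝ => ∫ x in (-T)..T, cexp (-b * (x - c) ^ 2)) atTop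
      (𝓝 ((π / b) ^ (1 / 2 : ℂ))) := by
  have hshift (T : ℝ) : ∫ x in (-T)..T, cexp (-b * (x - c) ^ 2) =
      ∫ x in (-(T + c))..(T - c), cexp (-b * x ^ 2) := by
    rw [neg_add', ← intervalIntegral.integral_comp_sub_right (fun x : ℝ => cexp (-b * x ^ 2))]
    simp
  simp only [hshift]
  rw [tendsto_iff_norm_sub_tendsto_zero]
  refine squeeze_zero' (Eventually.of_forall fun _ => norm_nonneg _)
    ((eventually_gt_atTop |c|).mono fun T hT => ?_) (g := fun T =>
      (‖b‖ * (T + c))⁻¹ + (‖b‖ * (T - c))⁻¹) ?_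
  · rw [norm_sub_rev]
    exact norm_cpow_sub_intervalIntegral_cexp_neg_mul_sq_le hb hb0
      (by linarith [neg_abs_le c]) (by linarith [le_abs_self c])
  · have hb' : 0 < ‖b‖ := norm_pos_iff.2 hb0
    simpa [sub_eq_add_neg] using
      ((tendsto_atTop_add_const_right _ c tendsto_id).const_mul_atTop hb').inv_tendsto_atTop.add
        ((tendsto_atTop_add_const_right _ (-c) tendsto_id).const_mul_atTop hb').inv_tendsto_atTop

end Gaussian

lemma tendsto_intervalIntegral_cexp_I_mul_sq_mul_fourier {a : ℝ} (ha : a ≠ 0) (ξ : ℝ) :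
    Tendsto (fun T : ℝ => ∫ x in (-T)..T, cexp (I * a * x ^ 2) * cexp (-2 * π * I * ξ * x))
      atTop (𝓝 ((π / (-I * a)) ^ (1 / 2 : ℂ) * cexp (-I * π ^ 2 * ξ ^ 2 / a))) := by
  have haC : (a : ℂ) ≠ 0 := ofReal_ne_zero.2 ha
  -- complete the square: `i a x² - 2π i ξ x = i a (x - π ξ / a)² - i π² ξ² / a`
  have hsquare (x : ℝ) : cexp (I * a * x ^ 2) * cexp (-2 * π * I * ξ * x) =
      cexp (-I * π ^ 2 * ξ ^ 2 / a) * cexp (-(-I * a) * (x - ↑(π * ξ / a)) ^ 2) := by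
    rw [← Complex.exp_add, ← Complex.exp_add]
    congr 1
    push_cast
    field_simp
    ring
  simp only [hsquare, intervalIntegral.integral_const_mul]
  rw [mul_comm ((π / (-I * a)) ^ (1 / 2 : ℂ))]
  refine (tendsto_intervalIntegral_cexp_neg_mul_sub_sq ?_ ?_ _).const_mul _
  · simp
  · simpa using haC

lemma cpow_half_pi_div_neg_I_mul {a : ℝ} (ha : 0 < a) :
    (π / (-I * a)) ^ (1 / 2 : ℂ) = √(π / a) * cexp (I * π / 4) := by
  have hpos : 0 < π / a := div_pos pi_pos ha
  have hw : (π : ℂ) / (-I * a) = ↑(π / a) * I := by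
    have : (a : ℂ) ≠ 0 := ofReal_ne_zero.2 ha.ne'
    field_simp
    push_cast
    rw [I_sq]
    field_simp
  rw [hw, cpow_def_of_ne_zero (mul_ne_zero (ofReal_ne_zero.2 hpos.ne') I_ne_zero),
    log_ofReal_mul hpos I_ne_zero, log_I, add_mul, Complex.exp_add, sqrt_eq_rpow,
    rpow_def_of_pos hpos]
  push_cast
  congr 2
  ring

/-- Fourier transform of the one-dimensional Fresnel kernel, as an improper integral:
`lim_{T→∞} ∫_{−T}^{T} e^{−iπ/4} √(k/(2πz)) exp(ikx²/(2z)) e^{−2πiξx} dx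
  = exp(−i(2π²z/k)ξ²)`. -/
theorem fresnel_kernel_fourier_transform (k z : ℝ) (hk : 0 < k) (hz : 0 < z) (ξ : ℝ) :
    Tendsto
      (fun T : ℝ => ∫ x in (-T)..T,
        Complex.exp (-Complex.I * (π : ℂ) / 4) * (Real.sqrt (k / (2 * π * z)) : ℂ) *
          Complex.exp (Complex.I * k * x ^ 2 / (2 * z)) *
          Complex.exp (-2 * (π : ℂ) * Complex.I * ξ * x))
      atTop
      (nhds (Complex.exp (-Complex.I * (2 * (π : ℂ) ^ 2 * z / k) * ξ ^ 2))) := by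
  have ha : 0 < k / (2 * z) := by positivity
  have hzC : (z : ℂ) ≠ 0 := ofReal_ne_zero.2 hz.ne'
  have hkC : (k : ℂ) ≠ 0 := ofReal_ne_zero.2 hk.ne'
  have hintegrand (x : ℝ) :
      cexp (-I * π / 4) * √(k / (2 * π * z)) * cexp (I * k * x ^ 2 / (2 * z)) *
        cexp (-2 * π * I * ξ * x) =
      cexp (-I * π / 4) * √(k / (2 * π * z)) *
        (cexp (I * ↑(k / (2 * z)) * x ^ 2) * cexp (-2 * π * I * ξ * x)) := by
    push_cast
    ring_nf
  have hnormalization : (√(k / (2 * π * z)) : ℂ) * √(π / (k / (2 * z))) = 1 := by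
    rw [← ofReal_mul, ← sqrt_mul (by positivity),
      show k / (2 * π * z) * (π / (k / (2 * z))) = 1 by field_simp, Real.sqrt_one, ofReal_one]
  have hvalue : cexp (-I * π / 4) * √(k / (2 * π * z)) *
      ((π / (-I * ↑(k / (2 * z)))) ^ (1 / 2 : ℂ) * cexp (-I * π ^ 2 * ξ ^ 2 / ↑(k / (2 * z)))) =
      cexp (-I * (2 * π ^ 2 * z / k) * ξ ^ 2) := by
    rw [cpow_half_pi_div_neg_I_mul ha]
    calc _ = cexp (-I * π / 4 + I * π / 4) * (√(k / (2 * π * z)) * √(π / (k / (2 * z)))) *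
          cexp (-I * π ^ 2 * ξ ^ 2 / ↑(k / (2 * z))) := by rw [Complex.exp_add]; ring
      _ = cexp (-I * π ^ 2 * ξ ^ 2 / ↑(k / (2 * z))) := by
        rw [hnormalization, neg_mul, neg_div, neg_add_cancel, Complex.exp_zero, one_mul, one_mul]
      _ = _ := by
        congr 1
        push_cast
        field_simp
  simp only [hintegrand, intervalIntegral.integral_const_mul]
  rw [← hvalue]
  exact (tendsto_intervalIntegral_cexp_I_mul_sq_mul_fourier ha.ne' ξ).const_mul _
end

section
/- Closed form of the Fresnel sinc-quadrature function: let k > 0, z > 0, δ > 0 be real and set W = 1/(2δ). For every real X, δ ∫_{−W}^{W} exp(−i(2π²z/k)ξ²) e^{2πiXξ} dξ = (δ/π) √(k/(2z)) exp(i k X²/(2z)) · ( C(μ₂) − C(μ₁) − i (S(μ₂) − S(μ₁)) ), where μ₁ = −π√(2z/k) W − √(k/(2z)) X and μ₂ = π√(2z/k) W − √(k/(2z)) X. -/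
/-!
Completing the square turns the chirp `exp(-i a ξ²) exp(2 i b ξ)` into the constant phase
`exp(i b²/a)` times `exp(-i (√a ξ - b/√a)²)`; the affine substitution `x = √a ξ - b/√a` then
leaves `(√a)⁻¹ ∫ exp(-i x²)` over the shifted interval, whose real and imaginary parts are
differences of Fresnel integrals. The theorem is the case `a = 2π²z/k`, `b = πX`.
-/

open Real

noncomputable def fresnelC (x : ℝ) : ℝ := ∫ μ in (0:ℝ)..x, Real.cos (μ ^ 2)

noncomputable def fresnelS (x : ℝ) : ℝ := ∫ μ in (0:ℝ)..x, Real.sin (μ ^ 2)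

open Complex (I)

lemma exp_neg_I_mul_sq (x : ℝ) :
    Complex.exp (-I * (x : ℂ) ^ 2) = (Real.cos (x ^ 2) : ℂ) - I * (Real.sin (x ^ 2) : ℂ) := by
  rw [show -I * (x : ℂ) ^ 2 = ((-(x ^ 2) : ℝ) : ℂ) * I by push_cast; ring, Complex.exp_mul_I]
  push_cast
  rw [Complex.cos_neg, Complex.sin_neg]
  ring

lemma integral_cos_sq_eq_fresnelC_sub (a b : ℝ) :
    ∫ x in a..b, Real.cos (x ^ 2) = fresnelC b - fresnelC a :=
  (intervalIntegral.integral_interval_sub_left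
    (Continuous.intervalIntegrable (by fun_prop) _ _)
    (Continuous.intervalIntegrable (by fun_prop) _ _)).symm

lemma integral_sin_sq_eq_fresnelS_sub (a b : ℝ) :
    ∫ x in a..b, Real.sin (x ^ 2) = fresnelS b - fresnelS a :=
  (intervalIntegral.integral_interval_sub_left
    (Continuous.intervalIntegrable (by fun_prop) _ _)
    (Continuous.intervalIntegrable (by fun_prop) _ _)).symm

lemma integral_exp_neg_I_mul_sq (a b : ℝ) :
    ∫ x in a..b, Complex.exp (-I * (x : ℂ) ^ 2) =
      ((fresnelC b - fresnelC a : ℝ) : ℂ) - I * ((fresnelS b - fresnelS a : ℝ) : ℂ) := by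
  simp_rw [exp_neg_I_mul_sq]
  rw [intervalIntegral.integral_sub (Continuous.intervalIntegrable (by fun_prop) _ _)
      (Continuous.intervalIntegrable (by fun_prop) _ _),
    intervalIntegral.integral_const_mul, intervalIntegral.integral_ofReal,
    intervalIntegral.integral_ofReal, integral_cos_sq_eq_fresnelC_sub,
    integral_sin_sq_eq_fresnelS_sub]

lemma exp_chirp_mul_exp_complete_square {a : ℝ} (ha : 0 < a) (b ξ : ℝ) :
    Complex.exp (-I * a * ξ ^ 2) * Complex.exp (2 * I * b * ξ) =
      Complex.exp (I * (b ^ 2 / a : ℝ)) *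
        Complex.exp (-I * ((√a * ξ - b / √a : ℝ) : ℂ) ^ 2) := by
  rw [← Complex.exp_add, ← Complex.exp_add]
  congr 1
  have hs : (√a : ℂ) ≠ 0 := by exact_mod_cast (Real.sqrt_pos.2 ha).ne'
  have hs2 : (√a : ℂ) ^ 2 = a := by exact_mod_cast Real.sq_sqrt ha.le
  have ha' : (a : ℂ) ≠ 0 := by exact_mod_cast ha.ne'
  push_cast
  field_simp
  rw [hs2]
  ring

lemma integral_exp_chirp_mul_exp_eq_fresnel {a : ℝ} (ha : 0 < a) (b p q : ℝ) :
    ∫ ξ in p..q, Complex.exp (-I * a * ξ ^ 2) * Complex.exp (2 * I * b * ξ) =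
      ((√a)⁻¹ : ℝ) * Complex.exp (I * (b ^ 2 / a : ℝ)) *
        (((fresnelC (√a * q - b / √a) - fresnelC (√a * p - b / √a) : ℝ) : ℂ) -
          I * ((fresnelS (√a * q - b / √a) - fresnelS (√a * p - b / √a) : ℝ) : ℂ)) := by
  simp_rw [exp_chirp_mul_exp_complete_square ha]
  rw [intervalIntegral.integral_const_mul,
    intervalIntegral.integral_comp_mul_left
      (fun x : ℝ => Complex.exp (-I * ((x - b / √a : ℝ) : ℂ) ^ 2)) (Real.sqrt_pos.2 ha).ne',
    intervalIntegral.integral_comp_sub_right (fun x : ℝ => Complex.exp (-I * (x : ℂ) ^ 2)),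
    integral_exp_neg_I_mul_sq, Complex.real_smul]
  ring

theorem fresnel_weights_closed_form_general (k z δ : ℝ) (hk : 0 < k) (hz : 0 < z)
    (W : ℝ) (X : ℝ) (μ₁ μ₂ : ℝ)
    (hμ₁ : μ₁ = -π * Real.sqrt (2 * z / k) * W - Real.sqrt (k / (2 * z)) * X)
    (hμ₂ : μ₂ = π * Real.sqrt (2 * z / k) * W - Real.sqrt (k / (2 * z)) * X) :
    (δ : ℂ) * ∫ ξ in (-W)..W,
        Complex.exp (-Complex.I * (2 * (π : ℂ) ^ 2 * z / k) * ξ ^ 2) *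
          Complex.exp (2 * (π : ℂ) * Complex.I * X * ξ) =
      ((δ / π : ℝ) : ℂ) * (Real.sqrt (k / (2 * z)) : ℂ) *
        Complex.exp (Complex.I * k * X ^ 2 / (2 * z)) *
        (((fresnelC μ₂ - fresnelC μ₁ : ℝ) : ℂ) -
          Complex.I * ((fresnelS μ₂ - fresnelS μ₁ : ℝ) : ℂ)) := by
  set a : ℝ := 2 * π ^ 2 * z / k with ha_def
  have ha : 0 < a := by positivity
  have hsqrt_a : √a = π * √(2 * z / k) := by
    rw [ha_def, show 2 * π ^ 2 * z / k = π ^ 2 * (2 * z / k) by ring,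
      Real.sqrt_mul (by positivity), Real.sqrt_sq pi_pos.le]
  have hsqrt_inv : √(k / (2 * z)) = (√(2 * z / k))⁻¹ := by
    rw [← Real.sqrt_inv, inv_div]
  have hshift : π * X / √a = √(k / (2 * z)) * X := by
    rw [hsqrt_a, hsqrt_inv]; field_simp
  have hphase : (π * X) ^ 2 / a = k * X ^ 2 / (2 * z) := by
    rw [ha_def]; field_simp
  have hscale : (√a)⁻¹ = π⁻¹ * √(k / (2 * z)) := by
    rw [hsqrt_a, hsqrt_inv, mul_inv]
  have hintegrand : ∀ ξ : ℝ,
      Complex.exp (-Complex.I * (2 * (π : ℂ) ^ 2 * z / k) * ξ ^ 2) *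
        Complex.exp (2 * (π : ℂ) * Complex.I * X * ξ) =
      Complex.exp (-I * a * ξ ^ 2) * Complex.exp (2 * I * (π * X : ℝ) * ξ) := by
    intro ξ; rw [ha_def]; push_cast; ring_nf
  simp_rw [hintegrand]
  have hμ₁' : √a * -W - π * X / √a = μ₁ := by rw [hμ₁, hshift, hsqrt_a]; ring
  have hμ₂' : √a * W - π * X / √a = μ₂ := by rw [hμ₂, hshift, hsqrt_a]
  rw [integral_exp_chirp_mul_exp_eq_fresnel ha, hμ₁', hμ₂', hscale, hphase]
  push_cast
  ring_nf

/-- Closed form of the one-dimensional Fresnel sinc-quadrature function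
`φ(X) = δ ∫_{−W}^{W} exp(−i(2π²z/k)ξ²) e^{2πiXξ} dξ`, with `W = 1/(2δ)`, in terms of the
Fresnel cosine and sine integrals. -/
theorem fresnel_weights_closed_form (k z δ : ℝ) (hk : 0 < k) (hz : 0 < z) (hδ : 0 < δ)
    (W : ℝ) (hW : W = 1 / (2 * δ)) (X : ℝ) (μ₁ μ₂ : ℝ)
    (hμ₁ : μ₁ = -π * Real.sqrt (2 * z / k) * W - Real.sqrt (k / (2 * z)) * X)
    (hμ₂ : μ₂ = π * Real.sqrt (2 * z / k) * W - Real.sqrt (k / (2 * z)) * X) :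
    (δ : ℂ) * ∫ ξ in (-W)..W,
        Complex.exp (-Complex.I * (2 * (π : ℂ) ^ 2 * z / k) * ξ ^ 2) *
          Complex.exp (2 * (π : ℂ) * Complex.I * X * ξ) =
      ((δ / π : ℝ) : ℂ) * (Real.sqrt (k / (2 * z)) : ℂ) *
        Complex.exp (Complex.I * k * X ^ 2 / (2 * z)) *
        (((fresnelC μ₂ - fresnelC μ₁ : ℝ) : ℂ) -
          Complex.I * ((fresnelS μ₂ - fresnelS μ₁ : ℝ) : ℂ)) :=
  fresnel_weights_closed_form_general k z δ hk hz W X μ₁ μ₂ hμ₁ hμ₂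
end

section
/- Remainder bound for the sinc-quadrature asymptotics: let κ ∈ ℝ and A ∈ ℝ with A ≠ 0. Then | ∫_{−1}^{1} μ² exp(−i(κ/2)μ²) e^{iAμ} dμ | ≤ (4 + |κ|/2)/|A|. -/
open Real

/-!
Write the integrand as `φ(μ) e^{iAμ}` with `φ(μ) = μ² e^{-iκμ²/2}` and integrate by parts once
against `e^{iAμ} = (iA)⁻¹ d/dμ e^{iAμ}`, which gains the factor `1/|A|`. The boundary terms have
modulus `|φ(±1)| = 1`, and the remaining integral is at most
`∫_{-1}^{1} |φ'| ≤ ∫_{-1}^{1} (2|μ| + |κ||μ|³) = 2 + |κ|/2`.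
-/

theorem intervalIntegral.integral_neg_self_comp_abs {f : ℝ → ℝ} (hf : Continuous f) {c : ℝ}
    (hc : 0 ≤ c) : ∫ x in -c..c, f |x| = 2 * ∫ x in 0..c, f x := by
  have hint (a b : ℝ) : IntervalIntegrable (fun x => f |x|) MeasureTheory.volume a b :=
    (hf.comp continuous_abs).intervalIntegrable _ _
  have hleft : ∫ x in -c..0, f |x| = ∫ x in 0..c, f |x| := by
    simpa using (intervalIntegral.integral_comp_neg (a := 0) (b := c) fun x => f |x|).symm
  have hright : ∫ x in 0..c, f |x| = ∫ x in 0..c, f x :=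
    intervalIntegral.integral_congr fun x hx => by
      rw [Set.uIcc_of_le hc] at hx
      rw [abs_of_nonneg hx.1]
  rw [← intervalIntegral.integral_add_adjacent_intervals (hint _ 0) (hint 0 _), hleft, hright]
  ring

open MeasureTheory Set in
theorem norm_integral_mul_cexp_I_mul_le {φ φ' : ℝ → ℂ} {a b : ℝ} (A : ℝ) (hab : a ≤ b)
    (hA : A ≠ 0) (hφ : ∀ x ∈ uIcc a b, HasDerivAt φ (φ' x) x)
    (hφ' : IntervalIntegrable φ' volume a b) :
    ‖∫ x in a..b, φ x * Complex.exp (Complex.I * A * x)‖ ≤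
      (‖φ a‖ + ‖φ b‖ + ∫ x in a..b, ‖φ' x‖) / |A| := by
  set v : ℝ → ℂ := fun x => Complex.exp (Complex.I * A * x) / (Complex.I * A)
  have hIA : Complex.I * A ≠ 0 := mul_ne_zero Complex.I_ne_zero (Complex.ofReal_ne_zero.2 hA)
  have hv (x : ℝ) : HasDerivAt v (Complex.exp (Complex.I * A * x)) x := by
    have := (((hasDerivAt_id (x : ℂ)).const_mul (Complex.I * A)).cexp.div_const
      (Complex.I * A)).comp_ofReal
    simpa [hIA] using this
  have hnorm_v (x : ℝ) : ‖v x‖ = 1 / |A| := by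
    have : Complex.I * A * x = Complex.I * (A * x : ℝ) := by push_cast; ring
    rw [norm_div, this, Complex.norm_exp_I_mul_ofReal]
    simp
  rw [intervalIntegral.integral_mul_deriv_eq_deriv_mul hφ (fun x _ => hv x) hφ'
    ((by fun_prop : Continuous fun x : ℝ => Complex.exp (Complex.I * A * x)).intervalIntegrable _ _)]
  have hrest : ‖∫ x in a..b, φ' x * v x‖ ≤ (∫ x in a..b, ‖φ' x‖) / |A| := by
    calc ‖∫ x in a..b, φ' x * v x‖ ≤ ∫ x in a..b, ‖φ' x * v x‖ :=
          intervalIntegral.norm_integral_le_integral_norm hab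
      _ = (∫ x in a..b, ‖φ' x‖) / |A| := by
          simp only [norm_mul, hnorm_v, intervalIntegral.integral_mul_const]
          ring
  calc ‖φ b * v b - φ a * v a - ∫ x in a..b, φ' x * v x‖
      ≤ ‖φ b * v b‖ + ‖φ a * v a‖ + ‖∫ x in a..b, φ' x * v x‖ :=
        (norm_sub_le _ _).trans (by gcongr; exact norm_sub_le _ _)
    _ ≤ ‖φ b‖ / |A| + ‖φ a‖ / |A| + (∫ x in a..b, ‖φ' x‖) / |A| := by
        simp only [norm_mul, hnorm_v, mul_one_div]
        gcongr
    _ = (‖φ a‖ + ‖φ b‖ + ∫ x in a..b, ‖φ' x‖) / |A| := by ring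

noncomputable def fresnelAmplitude (κ μ : ℝ) : ℂ :=
  (μ : ℂ) ^ 2 * Complex.exp (-Complex.I * (κ / 2 : ℝ) * μ ^ 2)

noncomputable def fresnelAmplitudeDeriv (κ μ : ℝ) : ℂ :=
  (2 * μ - Complex.I * κ * μ ^ 3) * Complex.exp (-Complex.I * (κ / 2 : ℝ) * μ ^ 2)

theorem norm_cexp_neg_I_mul_ofReal_mul_sq (κ μ : ℝ) :
    ‖Complex.exp (-Complex.I * (κ / 2 : ℝ) * μ ^ 2)‖ = 1 := by
  have : -Complex.I * (κ / 2 : ℝ) * μ ^ 2 = Complex.I * (-(κ / 2) * μ ^ 2 : ℝ) := by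
    push_cast; ring
  rw [this, Complex.norm_exp_I_mul_ofReal]

theorem norm_fresnelAmplitude (κ μ : ℝ) : ‖fresnelAmplitude κ μ‖ = μ ^ 2 := by
  rw [fresnelAmplitude, norm_mul, norm_cexp_neg_I_mul_ofReal_mul_sq]
  simp

theorem hasDerivAt_fresnelAmplitude (κ μ : ℝ) :
    HasDerivAt (fresnelAmplitude κ) (fresnelAmplitudeDeriv κ μ) μ := by
  have hsq : HasDerivAt (fun z : ℂ => z ^ 2) (2 * μ) μ := by
    simpa using hasDerivAt_pow 2 (μ : ℂ)
  refine (hsq.mul (hsq.const_mul (-Complex.I * (κ / 2 : ℝ))).cexp).comp_ofReal.congr_deriv ?_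
  rw [fresnelAmplitudeDeriv]
  push_cast
  ring

theorem norm_fresnelAmplitudeDeriv_le (κ μ : ℝ) :
    ‖fresnelAmplitudeDeriv κ μ‖ ≤ 2 * |μ| + |κ| * |μ| ^ 3 := by
  rw [fresnelAmplitudeDeriv, norm_mul, norm_cexp_neg_I_mul_ofReal_mul_sq, mul_one]
  refine (norm_sub_le _ _).trans_eq ?_
  simp

theorem continuous_fresnelAmplitudeDeriv (κ : ℝ) : Continuous (fresnelAmplitudeDeriv κ) := by
  unfold fresnelAmplitudeDeriv
  fun_prop

theorem integral_norm_fresnelAmplitudeDeriv_le (κ : ℝ) :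
    ∫ μ in (-1 : ℝ)..1, ‖fresnelAmplitudeDeriv κ μ‖ ≤ 2 + |κ| / 2 := by
  calc ∫ μ in (-1 : ℝ)..1, ‖fresnelAmplitudeDeriv κ μ‖
      ≤ ∫ μ in (-1 : ℝ)..1, (2 * |μ| + |κ| * |μ| ^ 3) :=
        intervalIntegral.integral_mono_on (by norm_num)
          ((continuous_fresnelAmplitudeDeriv κ).norm.intervalIntegrable _ _)
          (by apply Continuous.intervalIntegrable; fun_prop)
          fun μ _ => norm_fresnelAmplitudeDeriv_le κ μ
    _ = 2 * ∫ μ in (0 : ℝ)..1, (2 * μ + |κ| * μ ^ 3) :=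
        intervalIntegral.integral_neg_self_comp_abs (f := fun x => 2 * x + |κ| * x ^ 3)
          (by fun_prop) zero_le_one
    _ = 2 + |κ| / 2 := by
        rw [intervalIntegral.integral_add (by apply Continuous.intervalIntegrable; fun_prop)
          (by apply Continuous.intervalIntegrable; fun_prop), intervalIntegral.integral_const_mul,
          intervalIntegral.integral_const_mul, integral_id, integral_pow]
        ring

/-- Remainder bound for the sinc-quadrature asymptotics:
`|∫_{−1}^{1} μ² exp(−i(κ/2)μ²) e^{iAμ} dμ| ≤ (4 + |κ|/2)/|A|`. -/
theorem fresnel_phi_remainder_bound (κ A : ℝ) (hA : A ≠ 0) :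
    ‖∫ μ in (-1:ℝ)..1,
        (μ : ℂ) ^ 2 * Complex.exp (-Complex.I * (κ / 2 : ℝ) * μ ^ 2) *
          Complex.exp (Complex.I * A * μ)‖ ≤ (4 + |κ| / 2) / |A| := by
  calc _ ≤ (‖fresnelAmplitude κ (-1)‖ + ‖fresnelAmplitude κ 1‖ +
          ∫ μ in (-1 : ℝ)..1, ‖fresnelAmplitudeDeriv κ μ‖) / |A| :=
        norm_integral_mul_cexp_I_mul_le A (by norm_num) hA
          (fun μ _ => hasDerivAt_fresnelAmplitude κ μ)
          ((continuous_fresnelAmplitudeDeriv κ).intervalIntegrable _ _)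
    _ ≤ (1 + 1 + (2 + |κ| / 2)) / |A| := by
        rw [norm_fresnelAmplitude, norm_fresnelAmplitude]
        gcongr
        · norm_num
        · norm_num
        · exact integral_norm_fresnelAmplitudeDeriv_le κ
    _ = (4 + |κ| / 2) / |A| := by ring
end

section
/- Quantitative asymptotics of the Fresnel quadrature weights at lattice points: let k > 0, z > 0, δ > 0 be real, let m be a nonzero integer, and set W = 1/(2δ), κ = π²z/(kδ²), t = z/(k m² δ²). Define φ(X) = δ ∫_{−W}^{W} exp(−i(2π²z/k)ξ²) e^{2πiXξ} dξ. Then | φ(mδ) − ( −i(−1)^m · t · e^{−iκ/2} ) | ≤ t² + κ t. -/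
/-!
Substituting `ξ = u / δ` turns `φ(mδ)` into `∫_{-1/2}^{1/2} e^{-2iκu²} e^{2πimu} du`. The function
`(u + πm/(2κ)) e^{-2iκu²} e^{2πimu}` is an exact antiderivative of `(1 + iπ²m²/κ − 4iκu²)` times
the integrand, and its boundary values at `u = ±1/2` are both `(−1)^m e^{−iκ/2}`. Multiplying by
`−it` (note `tπ²m² = κ`) gives `(1 − it) φ(mδ) − 4κt ∫ u² e^{…} = M`, with `M` the claimed leading
term. Since `|1 − it| ≥ 1`, `|M| = t` and `|∫ u² e^{…}| ≤ 1/12`, the error is at most `t² + κt/3`.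
-/

open Real Complex

noncomputable def chirp (κ ν u : ℝ) : ℂ := cexp (-2 * I * κ * u ^ 2) * cexp (2 * π * I * ν * u)

theorem norm_chirp (κ ν u : ℝ) : ‖chirp κ ν u‖ = 1 := by
  rw [chirp, norm_mul,
    show -2 * I * κ * u ^ 2 = ((-2 * κ * u ^ 2 : ℝ) : ℂ) * I by push_cast; ring,
    show 2 * π * I * ν * u = ((2 * π * ν * u : ℝ) : ℂ) * I by push_cast; ring,
    norm_exp_ofReal_mul_I, norm_exp_ofReal_mul_I, mul_one]

@[fun_prop]
theorem continuous_chirp (κ ν : ℝ) : Continuous (chirp κ ν) := by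
  unfold chirp; fun_prop

theorem hasDerivAt_chirp (κ ν u : ℝ) :
    HasDerivAt (chirp κ ν) ((-4 * I * κ * u + 2 * π * I * ν) * chirp κ ν u) u := by
  have hlin : HasDerivAt (fun x : ℝ => (x : ℂ)) 1 u := (hasDerivAt_id u).ofReal_comp
  have hsq : HasDerivAt (fun x : ℝ => (x : ℂ) ^ 2) (2 * u) u := by
    simpa using (hasDerivAt_pow 2 (u : ℂ)).comp_ofReal
  exact ((hsq.const_mul (-2 * I * κ)).cexp.mul (hlin.const_mul (2 * π * I * ν)).cexp).congr_deriv
    (by rw [chirp]; ring)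

theorem integral_rescale_eq_integral_chirp (a ν : ℝ) {δ : ℝ} (hδ : δ ≠ 0) :
    (δ : ℂ) * ∫ ξ in -(1 / (2 * δ))..1 / (2 * δ),
        cexp (-I * a * ξ ^ 2) * cexp (2 * π * I * ((ν * δ : ℝ) : ℂ) * ξ) =
      ∫ u in (-1 / 2 : ℝ)..1 / 2, chirp (a / (2 * δ ^ 2)) ν u := by
  have hscale : ∀ ξ : ℝ, cexp (-I * a * ξ ^ 2) * cexp (2 * π * I * ((ν * δ : ℝ) : ℂ) * ξ) =
      chirp (a / (2 * δ ^ 2)) ν (δ * ξ) := by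
    intro ξ
    have : (δ : ℂ) ≠ 0 := ofReal_ne_zero.mpr hδ
    rw [chirp]
    push_cast
    congr 2
    · field_simp
    · ring
  simp only [hscale]
  rw [intervalIntegral.integral_comp_mul_left _ hδ, real_smul, ← mul_assoc, ofReal_inv,
    mul_inv_cancel₀ (ofReal_ne_zero.mpr hδ), one_mul]
  congr 1 <;> field_simp

theorem integral_chirp_by_parts {κ : ℝ} (hκ : κ ≠ 0) (ν a b : ℝ) :
    (1 + I * π ^ 2 * ν ^ 2 / κ) * (∫ u in a..b, chirp κ ν u) -
        4 * I * κ * ∫ u in a..b, (u : ℂ) ^ 2 * chirp κ ν u =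
      (b + π * ν / (2 * κ)) * chirp κ ν b - (a + π * ν / (2 * κ)) * chirp κ ν a := by
  have hκ' : (κ : ℂ) ≠ 0 := ofReal_ne_zero.mpr hκ
  have hderiv : ∀ u : ℝ, HasDerivAt (fun x : ℝ => ((x : ℂ) + π * ν / (2 * κ)) * chirp κ ν x)
      ((1 + I * π ^ 2 * ν ^ 2 / κ) * chirp κ ν u - 4 * I * κ * ((u : ℂ) ^ 2 * chirp κ ν u)) u := by
    intro u
    refine (((hasDerivAt_id u).ofReal_comp.add_const _).mul (hasDerivAt_chirp κ ν u)).congr_deriv ?_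
    simp only [id_eq, ofReal_one]
    field_simp
    ring
  rw [← intervalIntegral.integral_const_mul, ← intervalIntegral.integral_const_mul,
    ← intervalIntegral.integral_sub (Continuous.intervalIntegrable (by fun_prop) _ _)
      (Continuous.intervalIntegrable (by fun_prop) _ _),
    intervalIntegral.integral_eq_sub_of_hasDerivAt (fun u _ => hderiv u)
      (Continuous.intervalIntegrable (by fun_prop) _ _)]

theorem chirp_half_int (κ : ℝ) (m : ℤ) :
    chirp κ m (1 / 2) = (-1) ^ m * cexp (-I * κ / 2) := by
  rw [chirp, mul_comm, ← exp_pi_mul_I, ← exp_int_mul]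
  congr 2 <;> push_cast <;> ring

theorem chirp_neg_half_int (κ : ℝ) (m : ℤ) : chirp κ m (-1 / 2) = chirp κ m (1 / 2) := by
  rw [chirp_half_int, chirp, mul_comm,
    show 2 * π * I * ((m : ℝ) : ℂ) * ((-1 / 2 : ℝ) : ℂ) = ((-m : ℤ) : ℂ) * (π * I) by
      push_cast; ring,
    exp_int_mul, exp_pi_mul_I, zpow_neg, ← inv_zpow, inv_neg, inv_one]
  congr 2; push_cast; ring

theorem integral_chirp_int_identity {κ t : ℝ} (hκ : κ ≠ 0) (m : ℤ) (ht : t * (π ^ 2 * m ^ 2) = κ) :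
    (1 - I * t) * (∫ u in (-1 / 2 : ℝ)..1 / 2, chirp κ m u) -
        ((4 * κ * t : ℝ) : ℂ) * ∫ u in (-1 / 2 : ℝ)..1 / 2, (u : ℂ) ^ 2 * chirp κ m u =
      -I * t * chirp κ m (1 / 2) := by
  have hparts := integral_chirp_by_parts hκ m (-1 / 2) (1 / 2)
  rw [chirp_neg_half_int] at hparts
  have htC : (t : ℂ) * (π ^ 2 * (m : ℝ) ^ 2) = κ := by exact_mod_cast ht
  have hκ' : (κ : ℂ) ≠ 0 := ofReal_ne_zero.mpr hκ
  linear_combination (norm := skip) (-I * t) * hparts -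
    (∫ u in (-1 / 2 : ℝ)..1 / 2, chirp κ m u) / κ * htC
  field_simp
  push_cast
  ring_nf
  rw [I_sq]
  ring

theorem norm_integral_sq_mul_chirp_le (κ ν : ℝ) :
    ‖∫ u in (-1 / 2 : ℝ)..1 / 2, (u : ℂ) ^ 2 * chirp κ ν u‖ ≤ 1 / 12 := by
  calc ‖∫ u in (-1 / 2 : ℝ)..1 / 2, (u : ℂ) ^ 2 * chirp κ ν u‖
      ≤ ∫ u in (-1 / 2 : ℝ)..1 / 2, ‖(u : ℂ) ^ 2 * chirp κ ν u‖ :=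
        intervalIntegral.norm_integral_le_integral_norm (by norm_num)
    _ = ∫ u in (-1 / 2 : ℝ)..1 / 2, u ^ 2 := by
        congr 1; ext u
        rw [norm_mul, norm_chirp, mul_one, norm_pow, norm_real, norm_eq_abs, sq_abs]
    _ = 1 / 12 := by norm_num [integral_pow]

theorem norm_sub_le_of_one_sub_I_mul_eq {Φ M E : ℂ} {t : ℝ}
    (h : (1 - I * t) * Φ - E = M) : ‖Φ - M‖ ≤ |t| * ‖M‖ + ‖E‖ := by
  have hfactor : (1 - I * t) * (Φ - M) = I * t * M + E := by linear_combination h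
  have hone : 1 ≤ ‖1 - I * t‖ := by
    simpa using abs_re_le_norm (1 - I * t)
  calc ‖Φ - M‖ ≤ ‖1 - I * t‖ * ‖Φ - M‖ := le_mul_of_one_le_left (norm_nonneg _) hone
    _ = ‖I * t * M + E‖ := by rw [← norm_mul, hfactor]
    _ ≤ |t| * ‖M‖ + ‖E‖ := by
        refine (norm_add_le _ _).trans_eq ?_
        rw [norm_mul, norm_mul, norm_I, one_mul, norm_real, norm_eq_abs]

/-- Quantitative asymptotics of the Fresnel sinc-quadrature weights at lattice points:
for `m ≠ 0`, with `W = 1/(2δ)`, `κ = π²z/(kδ²)`, `t = z/(km²δ²)`, and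
`φ(X) = δ ∫_{−W}^{W} exp(−i(2π²z/k)ξ²) e^{2πiXξ} dξ`, one has
`|φ(mδ) − (−i(−1)^m t e^{−iκ/2})| ≤ t² + κt`. -/
theorem fresnel_weight_asymptotics (k z δ : ℝ) (hk : 0 < k) (hz : 0 < z) (hδ : 0 < δ)
    (m : ℤ) (hm : m ≠ 0) (W κ t : ℝ)
    (hW : W = 1 / (2 * δ)) (hκ : κ = π ^ 2 * z / (k * δ ^ 2))
    (ht : t = z / (k * (m : ℝ) ^ 2 * δ ^ 2))
    (φ : ℝ → ℂ)
    (hφ : ∀ X : ℝ, φ X = (δ : ℂ) * ∫ ξ in (-W)..W,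
      Complex.exp (-Complex.I * (2 * (π : ℂ) ^ 2 * z / k) * ξ ^ 2) *
        Complex.exp (2 * (π : ℂ) * Complex.I * X * ξ)) :
    ‖φ ((m : ℝ) * δ) -
        -Complex.I * (-1 : ℂ) ^ m * (t : ℂ) * Complex.exp (-Complex.I * κ / 2)‖ ≤
      t ^ 2 + κ * t := by
  have hκpos : 0 < κ := by rw [hκ]; positivity
  have htpos : 0 < t := by rw [ht]; positivity
  have htκ : t * (π ^ 2 * m ^ 2) = κ := by rw [ht, hκ]; field_simp
  have hcoeff : (2 * (π : ℂ) ^ 2 * z / k) = ((2 * π ^ 2 * z / k : ℝ) : ℂ) := by push_cast; rfl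
  have hscale : 2 * π ^ 2 * z / k / (2 * δ ^ 2) = κ := by rw [hκ]; field_simp
  rw [hφ, hW, hcoeff, integral_rescale_eq_integral_chirp _ _ hδ.ne', hscale,
    show -I * (-1 : ℂ) ^ m * t * cexp (-I * κ / 2) = -I * t * chirp κ m (1 / 2) by
      rw [chirp_half_int]; ring]
  set J := ∫ u in (-1 / 2 : ℝ)..1 / 2, (u : ℂ) ^ 2 * chirp κ m u
  have hkey := integral_chirp_int_identity hκpos.ne' m htκ
  calc _ ≤ |t| * ‖-I * t * chirp κ m (1 / 2)‖ + ‖((4 * κ * t : ℝ) : ℂ) * J‖ :=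
        norm_sub_le_of_one_sub_I_mul_eq hkey
    _ = t ^ 2 + 4 * κ * t * ‖J‖ := by
        simp only [norm_mul, norm_neg, norm_I, norm_real, norm_chirp, Real.norm_eq_abs,
          abs_of_pos htpos, abs_of_pos hκpos]
        ring
    _ ≤ t ^ 2 + κ * t := by
        have hJ : ‖J‖ ≤ 1 / 12 := norm_integral_sq_mul_chirp_le κ m
        nlinarith [mul_le_mul_of_nonneg_left hJ (by positivity : 0 ≤ 4 * κ * t)]
end

section
/- Exact Fresnel propagation of a Gaussian beam: let w₀ > 0, k > 0, z > 0 and X, Y ∈ ℝ. Then ∫∫_{ℝ²} π w₀² exp(−π² w₀² (ξ² + η²)) exp(−i(2π²z/k)(ξ² + η²)) e^{2πi(Xξ + Yη)} dξ dη = (1 + (2z/(k w₀²))²)^{−1/2} · exp( −(X² + Y²)/(w₀² (1 + (2z/(k w₀²))²)) − i·arctan(2z/(k w₀²)) + i (k/(2z)) (X² + Y²)/(1 + (k w₀²/(2z))²) ). -/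
open MeasureTheory Real

/-- Exact Fresnel propagation of a Gaussian beam: the inverse Fourier integral of the
Fresnel transfer function times the Gaussian spectrum `πw₀² exp(−π²w₀²(ξ²+η²))` equals
the classical Gaussian-beam closed form. -/
theorem gaussian_beam_fresnel_propagation (w₀ k z : ℝ) (hw : 0 < w₀) (hk : 0 < k)
    (hz : 0 < z) (X Y : ℝ) :
    (∫ q : ℝ × ℝ,
      ((π * w₀ ^ 2 : ℝ) : ℂ) *
        Complex.exp (-((π ^ 2 * w₀ ^ 2 * (q.1 ^ 2 + q.2 ^ 2) : ℝ) : ℂ)) *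
        Complex.exp (-Complex.I * (2 * (π : ℂ) ^ 2 * z / k) * (q.1 ^ 2 + q.2 ^ 2)) *
        Complex.exp (2 * (π : ℂ) * Complex.I * (X * q.1 + Y * q.2))) =
      ((Real.sqrt (1 + (2 * z / (k * w₀ ^ 2)) ^ 2))⁻¹ : ℝ) *
        Complex.exp
          (-(((X ^ 2 + Y ^ 2) / (w₀ ^ 2 * (1 + (2 * z / (k * w₀ ^ 2)) ^ 2)) : ℝ) : ℂ) -
            Complex.I * (Real.arctan (2 * z / (k * w₀ ^ 2)) : ℂ) +
            Complex.I * (k / (2 * z) : ℂ) *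
              (((X ^ 2 + Y ^ 2) / (1 + (k * w₀ ^ 2 / (2 * z)) ^ 2) : ℝ) : ℂ)) := by
  have hkC : (k:ℂ) ≠ 0 := by exact_mod_cast hk.ne'
  have hzC : (z:ℂ) ≠ 0 := by exact_mod_cast hz.ne'
  have hwC : (w₀:ℂ) ≠ 0 := by exact_mod_cast hw.ne'
  have hπC : ((π:ℝ):ℂ) ≠ 0 := by exact_mod_cast Real.pi_ne_zero
  set b : ℂ := -(((π^2*w₀^2 : ℝ)):ℂ) - Complex.I * (((2*π^2*z/k : ℝ)):ℂ) with hbdef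
  have hbre : b.re < 0 := by
    simp only [hbdef, Complex.sub_re, Complex.neg_re, Complex.ofReal_re, Complex.mul_re,
      Complex.I_re, Complex.I_im, Complex.ofReal_im]
    nlinarith [pow_pos Real.pi_pos 2, pow_pos hw 2,
      mul_pos (pow_pos Real.pi_pos 2) (pow_pos hw 2)]
  have hbne : b ≠ 0 := fun h => by simp [h] at hbre
  have h1 : ∀ (u v wz a : ℂ), a * Complex.exp u * Complex.exp v * Complex.exp wz
      = a * Complex.exp (u + v + wz) := by
    intro u v wz a; rw [Complex.exp_add, Complex.exp_add]; ring
  have h2 : ∀ (u v a : ℂ), a * Complex.exp u * Complex.exp v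
      = a * Complex.exp (u + v) := by
    intro u v a; rw [Complex.exp_add]; ring
  have key : ∀ q : ℝ × ℝ,
      ((π * w₀ ^ 2 : ℝ) : ℂ) *
        Complex.exp (-((π ^ 2 * w₀ ^ 2 * (q.1 ^ 2 + q.2 ^ 2) : ℝ) : ℂ)) *
        Complex.exp (-Complex.I * (2 * (π : ℂ) ^ 2 * z / k) * (q.1 ^ 2 + q.2 ^ 2)) *
        Complex.exp (2 * (π : ℂ) * Complex.I * (X * q.1 + Y * q.2)) =
      (((π * w₀ ^ 2 : ℝ) : ℂ) *
        Complex.exp (b * (q.1:ℂ) ^ 2 + (2 * (π:ℂ) * Complex.I * X) * q.1 + 0)) *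
        Complex.exp (b * (q.2:ℂ) ^ 2 + (2 * (π:ℂ) * Complex.I * Y) * q.2 + 0) := by
    intro q
    rw [h1, h2]
    congr 1
    congr 1
    push_cast [hbdef]
    field_simp
    ring
  simp_rw [key]
  rw [MeasureTheory.Measure.volume_eq_prod, MeasureTheory.integral_prod_mul
    (fun x : ℝ => ((π * w₀ ^ 2 : ℝ) : ℂ) *
      Complex.exp (b * (x:ℂ) ^ 2 + (2 * (π:ℂ) * Complex.I * X) * x + 0))
    (fun y : ℝ => Complex.exp (b * (y:ℂ) ^ 2 + (2 * (π:ℂ) * Complex.I * Y) * y + 0))]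
  rw [MeasureTheory.integral_const_mul, integral_cexp_quadratic hbre _ 0,
    integral_cexp_quadratic hbre _ 0]

  -- abbreviations
  set t : ℝ := 2 * z / (k * w₀ ^ 2) with htdef
  have ht0 : (0:ℝ) < 1 + t^2 := by positivity
  have ht2C : ((1 + t^2 : ℝ) : ℂ) ≠ 0 := by exact_mod_cast ht0.ne'
  have hPne : ((π:ℂ) / -b) ≠ 0 := div_ne_zero hπC (neg_ne_zero.mpr hbne)
  have hPP : ((π:ℂ)/ -b) ^ (1/2 : ℂ) * ((π:ℂ)/ -b) ^ (1/2 : ℂ) = (π:ℂ)/ -b := by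
    rw [← Complex.cpow_add _ _ hPne]
    norm_num
  have hsq : ∀ c : ℝ, (2*(π:ℂ)*Complex.I*(c:ℂ))^2 = -(4*(π:ℂ)^2*(c:ℂ)^2) := by
    intro c
    rw [show (2*(π:ℂ)*Complex.I*(c:ℂ))^2 = (2*(π:ℂ)*(c:ℂ))^2 * Complex.I^2 by ring,
      Complex.I_sq]
    ring
  have hS : (0 - (2*(π:ℂ)*Complex.I*(X:ℂ))^2/(4*b)) + (0 - (2*(π:ℂ)*Complex.I*(Y:ℂ))^2/(4*b))
      = (π:ℂ)^2*((X:ℂ)^2+(Y:ℂ)^2)/b := by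
    rw [hsq X, hsq Y]
    field_simp
    ring
  -- scalar part
  set s : ℝ := Real.sqrt (1 + t^2) with hsdef
  have hs0 : (0:ℝ) < s := Real.sqrt_pos.mpr ht0
  have hsC : (s:ℂ) ≠ 0 := by exact_mod_cast hs0.ne'
  have hs2 : (s:ℝ)^2 = 1 + t^2 := Real.sq_sqrt ht0.le
  have harc : ((s⁻¹ : ℝ) : ℂ) * Complex.exp (-Complex.I * ((Real.arctan t : ℝ) : ℂ))
      = (1 - Complex.I * (t:ℂ)) / (((1 + t^2 : ℝ)):ℂ) := by
    rw [show (-Complex.I * ((Real.arctan t : ℝ):ℂ)) = (((-Real.arctan t : ℝ)):ℂ) * Complex.I by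
      push_cast; ring]
    rw [Complex.exp_mul_I, ← Complex.ofReal_cos, ← Complex.ofReal_sin,
      Real.cos_neg, Real.sin_neg, Real.cos_arctan, Real.sin_arctan]
    rw [show ((1 + t^2 : ℝ):ℂ) = ((s:ℂ))^2 by rw [← hs2]; push_cast; ring]
    push_cast [← hsdef]
    field_simp
    ring
  -- scalar equality
  have hscal : ((π * w₀ ^ 2 : ℝ) : ℂ) * ((π:ℂ)/ -b) = (1 - Complex.I * (t:ℂ)) / (((1 + t^2 : ℝ)):ℂ) := by
    rw [show ((π * w₀ ^ 2 : ℝ):ℂ) * ((π:ℂ)/ -b) = (((π * w₀ ^ 2 : ℝ):ℂ) * (π:ℂ))/ -b from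
      (mul_div_assoc _ _ _).symm]
    rw [div_eq_div_iff (neg_ne_zero.mpr hbne) ht2C, hbdef]
    simp only [htdef]
    push_cast
    field_simp
    ring_nf
    simp [Complex.I_sq]
  -- exponent equality
  have hd1 : (0:ℝ) < 1 + (k * w₀ ^ 2 / (2 * z)) ^ 2 := by positivity
  have cmul : ∀ x1 y1 x2 y2 : ℝ, ((x1:ℂ) + (y1:ℂ)*Complex.I) * ((x2:ℂ) + (y2:ℂ)*Complex.I)
      = ((x1*x2 - y1*y2 : ℝ):ℂ) + ((x1*y2 + y1*x2 : ℝ):ℂ)*Complex.I := by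
    intro x1 y1 x2 y2
    apply Complex.ext <;> simp
  have hexp : (π:ℂ)^2*((X:ℂ)^2+(Y:ℂ)^2)/b =
      -(((X ^ 2 + Y ^ 2) / (w₀ ^ 2 * (1 + t ^ 2)) : ℝ) : ℂ) +
        Complex.I * ((k:ℂ) / (2 * (z:ℂ))) *
          (((X ^ 2 + Y ^ 2) / (1 + (k * w₀ ^ 2 / (2 * z)) ^ 2) : ℝ) : ℂ) := by
    rw [div_eq_iff hbne]
    rw [show (π:ℂ)^2*((X:ℂ)^2+(Y:ℂ)^2) = ((π^2*(X^2+Y^2) : ℝ):ℂ) by push_cast; ring]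
    rw [show (-(((X ^ 2 + Y ^ 2) / (w₀ ^ 2 * (1 + t ^ 2)) : ℝ) : ℂ) +
        Complex.I * ((k:ℂ) / (2 * (z:ℂ))) *
          (((X ^ 2 + Y ^ 2) / (1 + (k * w₀ ^ 2 / (2 * z)) ^ 2) : ℝ) : ℂ))
        = (((-((X ^ 2 + Y ^ 2) / (w₀ ^ 2 * (1 + t ^ 2))) : ℝ):ℂ) +
          ((k/(2*z)*((X ^ 2 + Y ^ 2) / (1 + (k * w₀ ^ 2 / (2 * z)) ^ 2)) : ℝ):ℂ)*Complex.I) by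
      push_cast; ring]
    rw [show b = (((-(π^2*w₀^2)) : ℝ):ℂ) + (((-(2*π^2*z/k)) : ℝ):ℂ)*Complex.I by
      rw [hbdef]; push_cast; ring]
    rw [cmul]
    rw [Complex.ext_iff]
    simp only [Complex.add_re, Complex.add_im, Complex.mul_re, Complex.mul_im,
      Complex.ofReal_re, Complex.ofReal_im, Complex.I_re, Complex.I_im]
    constructor
    · simp only [htdef]
      field_simp
      ring
    · simp only [htdef]
      field_simp
      ring
  have final : ∀ (a P e1 e2 : ℂ), a * (P * e1) * (P * e2) = (a * (P * P)) * (e1 * e2) := by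
    intros; ring
  rw [final, hPP, ← Complex.exp_add, hS]
  rw [show (-(((X ^ 2 + Y ^ 2) / (w₀ ^ 2 * (1 + t ^ 2)) : ℝ) : ℂ) -
        Complex.I * ((Real.arctan t : ℝ):ℂ) +
        Complex.I * ((k:ℂ)/(2*(z:ℂ))) *
          (((X ^ 2 + Y ^ 2) / (1 + (k * w₀ ^ 2 / (2 * z)) ^ 2) : ℝ):ℂ))
      = (-Complex.I * ((Real.arctan t : ℝ):ℂ)) +
        (-(((X ^ 2 + Y ^ 2) / (w₀ ^ 2 * (1 + t ^ 2)) : ℝ) : ℂ) +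
          Complex.I * ((k:ℂ)/(2*(z:ℂ))) *
            (((X ^ 2 + Y ^ 2) / (1 + (k * w₀ ^ 2 / (2 * z)) ^ 2) : ℝ):ℂ)) by ring,
    Complex.exp_add, ← mul_assoc, harc, ← hexp, ← hscal]
end
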